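/- Define P^u_d(m) = Σ_{k=0}^{d-m} C(d-m,k) · ∏_{i=0}^{k-1}(m+i+1-r)(i+r) · ∏_{j=k+1}^{d-m}(d-m+r-j)(u+r+j) and ψ_k(x) = ∏_{i=1}^{k}(x+i)(i-1+2r). Then for all natural numbers m ≤ d, one has P^m_d(m) = ψ_{d-m}(m), as polynomials in r. -/

import Mathlib

open Polynomial Finset

/-- `P u d m = Σ_{k=0}^{d-m} C(d-m,k) · ∏_{i=0}^{k-1}(m+i+1-r)(i+r)
· ∏_{j=k+1}^{d-m}(d-m+r-j)(u+r+j)`, a polynomial in the indeterminate `r = X` over `ℚ`. -/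
noncomputable def P (u d m : ℕ) : Polynomial ℚ :=
  ∑ k ∈ Finset.range (d - m + 1),
    ((d - m).choose k : ℚ[X]) *
      (∏ i ∈ Finset.range k, (((m : ℚ[X]) + (i : ℚ[X]) + 1 - X) * ((i : ℚ[X]) + X))) *
      ∏ j ∈ Finset.Icc (k + 1) (d - m),
        ((((d - m : ℕ) : ℚ[X]) + X - (j : ℚ[X])) * ((u : ℚ[X]) + X + (j : ℚ[X])))

/-- `ψ k x = ∏_{i=1}^{k} (x+i)(i-1+2r)`. -/
noncomputable def psi (k : ℕ) (x : Polynomial ℚ) : Polynomial ℚ :=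
  ∏ i ∈ Finset.Icc 1 k, ((x + (i : ℚ[X])) * ((i : ℚ[X]) - 1 + 2 * X))

/-!
With `F n k = C(n,k) (x+1-r)ₖ (r)ₖ (r)ₙ₋ₖ (x+r+k+1)ₙ₋ₖ` (rising factorials), `P^m_d(m)` is
`∑ₖ F n k` for `n = d - m`, `x = m`, once `∏_{j=k+1}^{n} (n+r-j)` is read backwards as `(r)ₙ₋ₖ`.
This is a terminating balanced `₃F₂`, and `∑ₖ F n k = (x+1)ₙ (2r)ₙ` holds for any `x`, `r` in a
commutative ring (Pfaff–Saalschütz). It follows by the Wilf–Zeilberger method: with the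
certificate `G n k = (x+k+1-r)(k+r) F n k`,
`F (n+1) (k+1) - (x+1+n)(2r+n) F n (k+1) = G n k - G n (k+1)`, so summing over `k` telescopes to
the first-order recurrence in `n` satisfied by `(x+1)ₙ (2r)ₙ`.
-/

section
variable {R : Type*} [CommSemiring R]

theorem ascPochhammer_eval_eq_prod_range (n : ℕ) (a : R) :
    (ascPochhammer R n).eval a = ∏ i ∈ range n, (a + i) := by
  induction n with
  | zero => simp
  | succ n ih => rw [ascPochhammer_succ_eval, ih, prod_range_succ]

theorem ascPochhammer_succ_eval_left (n : ℕ) (a : R) :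
    (ascPochhammer R (n + 1)).eval a = a * (ascPochhammer R n).eval (a + 1) := by
  rw [ascPochhammer_succ_left, eval_mul, eval_X, eval_comp, eval_add, eval_X, eval_one]

theorem prod_Icc_add_eq_ascPochhammer_eval (a : R) (k n : ℕ) :
    ∏ j ∈ Icc (k + 1) n, (a + j) = (ascPochhammer R (n - k)).eval (a + k + 1) := by
  rw [← Ico_add_one_right_eq_Icc, prod_Ico_eq_prod_range, ascPochhammer_eval_eq_prod_range,
    Nat.add_sub_add_right]
  refine prod_congr rfl fun t _ => ?_
  push_cast
  ring

end

section
variable {R : Type*} [CommRing R] (x r : R)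

theorem prod_Icc_sub_eq_ascPochhammer_eval (a : R) (k n : ℕ) :
    ∏ j ∈ Icc (k + 1) n, ((n : R) + a - j) = (ascPochhammer R (n - k)).eval a := by
  rw [← Ico_add_one_right_eq_Icc, prod_Ico_eq_prod_range, ascPochhammer_eval_eq_prod_range,
    Nat.add_sub_add_right, ← prod_range_reflect]
  refine prod_congr rfl fun t ht => ?_
  have hn : ((k + 1 + (n - k - 1 - t) : ℕ) : R) + t = n := by
    rw [← Nat.cast_add]
    congr 1
    have := mem_range.mp ht
    omega
  linear_combination -hn

noncomputable def saalschutzTerm (n k : ℕ) : R :=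
  n.choose k * ((ascPochhammer R k).eval (x + 1 - r) * (ascPochhammer R k).eval r) *
    ((ascPochhammer R (n - k)).eval r * (ascPochhammer R (n - k)).eval (x + r + k + 1))

noncomputable def saalschutzCert (n k : ℕ) : R :=
  (x + k + 1 - r) * (k + r) * saalschutzTerm x r n k

theorem saalschutzTerm_of_lt {n k : ℕ} (h : n < k) : saalschutzTerm x r n k = 0 := by
  rw [saalschutzTerm, Nat.choose_eq_zero_of_lt h, Nat.cast_zero, zero_mul, zero_mul]

theorem saalschutzTerm_succ_zero (n : ℕ) :
    saalschutzTerm x r (n + 1) 0 - (x + 1 + n) * (2 * r + n) * saalschutzTerm x r n 0 =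
      -saalschutzCert x r n 0 := by
  simp only [saalschutzCert, saalschutzTerm, Nat.choose_zero_right, Nat.sub_zero,
    ascPochhammer_succ_eval, Nat.cast_zero]
  push_cast
  ring

theorem saalschutzTerm_succ_self (n : ℕ) :
    saalschutzTerm x r (n + 1) (n + 1) = saalschutzCert x r n n := by
  simp only [saalschutzCert, saalschutzTerm, Nat.choose_self, Nat.sub_self,
    ascPochhammer_succ_eval, ascPochhammer_zero, eval_one]
  push_cast
  ring

theorem saalschutzTerm_succ_succ {n j : ℕ} (hj : j + 1 ≤ n) :
    saalschutzTerm x r (n + 1) (j + 1) - (x + 1 + n) * (2 * r + n) * saalschutzTerm x r n (j + 1) =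
      saalschutzCert x r n j - saalschutzCert x r n (j + 1) := by
  obtain ⟨l, rfl⟩ := Nat.exists_eq_add_of_le hj
  have hchoose : ((j + 1 + l).choose (j + 1) : R) * (j + 1) = (j + 1 + l).choose j * (l + 1) := by
    have h := Nat.choose_succ_right_eq (j + 1 + l) j
    rw [show j + 1 + l - j = l + 1 by omega] at h
    exact_mod_cast congrArg (Nat.cast : ℕ → R) h
  have hshift : (ascPochhammer R (l + 1)).eval (x + r + j + 1) =
      (x + r + j + 1) * (ascPochhammer R l).eval (x + r + ((j + 1 : ℕ) : R) + 1) := by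
    rw [ascPochhammer_succ_eval_left]
    congr 2
    push_cast
    ring
  simp only [saalschutzCert, saalschutzTerm, show j + 1 + l + 1 - (j + 1) = l + 1 by omega,
    show j + 1 + l - (j + 1) = l by omega, show j + 1 + l - j = l + 1 by omega, hshift,
    Nat.choose_succ_succ', ascPochhammer_succ_eval]
  push_cast
  linear_combination (-(r + l) * (ascPochhammer R j).eval (x + 1 - r) * (ascPochhammer R j).eval r
    * ((x + 1 - r + j) * (r + j)) * (ascPochhammer R l).eval r
    * (ascPochhammer R l).eval (x + r + (j + 1) + 1)) * hchoose

theorem sum_saalschutzTerm_succ (n : ℕ) :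
    ∑ k ∈ range (n + 2), saalschutzTerm x r (n + 1) k =
      (x + 1 + n) * (2 * r + n) * ∑ k ∈ range (n + 1), saalschutzTerm x r n k := by
  have htelescope : ∑ k ∈ range (n + 2),
      (saalschutzTerm x r (n + 1) k - (x + 1 + n) * (2 * r + n) * saalschutzTerm x r n k) = 0 := by
    have hmiddle : ∑ j ∈ range n, (saalschutzTerm x r (n + 1) (j + 1) -
        (x + 1 + n) * (2 * r + n) * saalschutzTerm x r n (j + 1)) =
          saalschutzCert x r n 0 - saalschutzCert x r n n := by
      rw [← sum_range_sub' (saalschutzCert x r n)]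
      exact sum_congr rfl fun j hj => saalschutzTerm_succ_succ x r (mem_range.mp hj)
    rw [sum_range_succ, sum_range_succ', hmiddle, saalschutzTerm_succ_zero,
      saalschutzTerm_succ_self, saalschutzTerm_of_lt x r (Nat.lt_add_one n)]
    ring
  rw [sum_sub_distrib, ← mul_sum, sum_range_succ (saalschutzTerm x r n) (n + 1),
    saalschutzTerm_of_lt x r (Nat.lt_add_one n), add_zero] at htelescope
  linear_combination htelescope

theorem sum_saalschutzTerm (n : ℕ) :
    ∑ k ∈ range (n + 1), saalschutzTerm x r n k =
      (ascPochhammer R n).eval (x + 1) * (ascPochhammer R n).eval (2 * r) := by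
  induction n with
  | zero => simp [saalschutzTerm]
  | succ n ih =>
    rw [sum_saalschutzTerm_succ, ih, ascPochhammer_succ_eval, ascPochhammer_succ_eval]
    ring

end

theorem P_self_eq_sum_saalschutzTerm (d m : ℕ) :
    P m d m = ∑ k ∈ range (d - m + 1), saalschutzTerm (m : ℚ[X]) X (d - m) k := by
  refine sum_congr rfl fun k _ => ?_
  have hrising : ∏ i ∈ range k, (((m : ℚ[X]) + (i : ℚ[X]) + 1 - X) * ((i : ℚ[X]) + X)) =
      (ascPochhammer ℚ[X] k).eval ((m : ℚ[X]) + 1 - X) * (ascPochhammer ℚ[X] k).eval X := by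
    rw [ascPochhammer_eval_eq_prod_range, ascPochhammer_eval_eq_prod_range, ← prod_mul_distrib]
    exact prod_congr rfl fun i _ => by ring
  rw [hrising, prod_mul_distrib, prod_Icc_sub_eq_ascPochhammer_eval,
    prod_Icc_add_eq_ascPochhammer_eval, saalschutzTerm, mul_assoc]

theorem psi_eq_ascPochhammer_eval (n : ℕ) (x : ℚ[X]) :
    psi n x = (ascPochhammer ℚ[X] n).eval (x + 1) * (ascPochhammer ℚ[X] n).eval (2 * X) := by
  induction n with
  | zero => simp [psi]
  | succ n ih =>
    rw [psi, prod_Icc_succ_top (Nat.le_add_left 1 n), ← psi, ih, ascPochhammer_succ_eval,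
      ascPochhammer_succ_eval]
    push_cast
    ring

theorem stmt18_general (d m : ℕ) : P m d m = psi (d - m) (m : ℚ[X]) := by
  rw [P_self_eq_sum_saalschutzTerm, sum_saalschutzTerm, psi_eq_ascPochhammer_eval]

theorem stmt18 (d m : ℕ) (hmd : m ≤ d) : P m d m = psi (d - m) (m : ℚ[X]) :=
  stmt18_general d m
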